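/- arXiv:2508.18119 — 2 statements merged into one kernel-verified Lean document; each statement's English description precedes it below -/
import Mathlib

section
/- (Energy asymptotics of the quasi-mode as b → 0⁺) Let m ≥ 1 be an integer, ν ∈ (−1/2, 1/2], and set a = m − ν. With χ(r) = 1 + ((a − b/2)/(a + b/2))·r^{−2a} and f(r) = r^{a}·e^{−b·r²/4}, there exist constants C > 0 and b₀ > 0 such that for all 0 < b < b₀: | b·∫₁^∞ r²·χ'(r)·χ(r)·f(r)² dr + 2a | ≤ C·√b. -/
/-!
With `κ = (a - b/2)/(a + b/2)`, the integrand equals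
`-2aκ · r e^{-br²/2} - 2aκ² · r^{1-2a} e^{-br²/2}`. The first term integrates exactly to
`-2aκ e^{-b/2} / b`, and `κ e^{-b/2} = 1 + O(b)`; the second is `b` times an integral bounded by
the half-line Gaussian integral `√(2π/b)/2`, hence `O(√b)`.
-/

open MeasureTheory Real Set Filter Topology

section Gaussian

variable {c : ℝ}

lemma integrableOn_Ioi_one_rpow_mul_exp_neg_mul_sq (hc : 0 < c) (p : ℝ) :
    IntegrableOn (fun r : ℝ => r ^ p * exp (-c * r ^ 2)) (Ioi 1) := by
  have hmax : IntegrableOn (fun r : ℝ => r ^ max p 0 * exp (-c * r ^ 2)) (Ioi 1) :=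
    (integrableOn_rpow_mul_exp_neg_mul_sq hc (by linarith [le_max_right p 0])).mono_set
      (Ioi_subset_Ioi zero_le_one)
  refine hmax.mono' (by fun_prop) ((ae_restrict_iff' measurableSet_Ioi).mpr ?_)
  refine .of_forall fun r (hr : 1 < r) => ?_
  rw [norm_of_nonneg (by positivity)]
  gcongr
  exacts [hr.le, le_max_left p 0]

lemma integral_Ioi_mul_exp_neg_mul_sq (hc : 0 < c) {t : ℝ} (ht : 0 ≤ t) :
    ∫ r in Ioi t, r * exp (-c * r ^ 2) = exp (-c * t ^ 2) / (2 * c) := by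
  have hderiv (r : ℝ) :
      HasDerivAt (fun s => -(exp (-c * s ^ 2) / (2 * c))) (r * exp (-c * r ^ 2)) r := by
    refine (((hasDerivAt_pow 2 r).const_mul (-c)).exp.div_const (2 * c)).fun_neg.congr_deriv ?_
    field_simp
    ring
  have hlim : Tendsto (fun s : ℝ => -(exp (-c * s ^ 2) / (2 * c))) atTop (𝓝 0) := by
    have hsq : Tendsto (fun s : ℝ => -c * s ^ 2) atTop atBot :=
      (tendsto_pow_atTop two_ne_zero).const_mul_atTop_of_neg (neg_neg_of_pos hc)
    simpa using ((tendsto_exp_atBot.comp hsq).div_const (2 * c)).neg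
  rw [integral_Ioi_of_hasDerivAt_of_nonneg' (fun r _ => hderiv r)
    (fun r (hr : t < r) => by have := ht.trans_lt hr; positivity) hlim]
  ring

lemma integral_Ioi_one_rpow_mul_exp_neg_mul_sq_le (hc : 0 < c) {p : ℝ} (hp : p ≤ 0) :
    ∫ r in Ioi 1, r ^ p * exp (-c * r ^ 2) ≤ √(π / c) / 2 := by
  rw [← integral_gaussian_Ioi]
  calc ∫ r in Ioi 1, r ^ p * exp (-c * r ^ 2)
      ≤ ∫ r in Ioi 1, exp (-c * r ^ 2) :=
        setIntegral_mono_on (integrableOn_Ioi_one_rpow_mul_exp_neg_mul_sq hc p)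
          ((integrable_exp_neg_mul_sq hc).integrableOn) measurableSet_Ioi fun r (hr : 1 < r) =>
          mul_le_of_le_one_left (exp_pos _).le (rpow_le_one_of_one_le_of_nonpos hr.le hp)
    _ ≤ ∫ r in Ioi 0, exp (-c * r ^ 2) :=
        setIntegral_mono_set (integrable_exp_neg_mul_sq hc).integrableOn
          (.of_forall fun r => (exp_pos _).le) (Ioi_subset_Ioi zero_le_one).eventuallyLE

end Gaussian

lemma mul_sqrt_pi_div_half_le {b : ℝ} (hb : 0 < b) : b * (√(π / (b / 2)) / 2) ≤ 2 * √b := by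
  have hsqrt : b * (√(π / (b / 2)) / 2) = √(π / 2 * b) := by
    rw [eq_comm, sqrt_eq_iff_mul_self_eq (by positivity) (by positivity)]
    rw [show b * (√(π / (b / 2)) / 2) * (b * (√(π / (b / 2)) / 2))
      = b ^ 2 * √(π / (b / 2)) ^ 2 / 4 by ring, sq_sqrt (by positivity)]
    field_simp
    norm_num
  rw [hsqrt, sqrt_le_iff, mul_pow, sq_sqrt hb.le]
  exact ⟨by positivity, by nlinarith [pi_le_four]⟩

section QuasiMode

variable {a b κ : ℝ}

lemma quasiMode_integrand_eq {r : ℝ} (hr : 0 < r) :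
    r ^ 2 * deriv (fun s : ℝ => 1 + κ * s ^ (-(2 * a))) r * (1 + κ * r ^ (-(2 * a))) *
        (r ^ a * exp (-b * r ^ 2 / 4)) ^ 2
      = -(2 * a * κ) * (r * exp (-(b / 2) * r ^ 2))
        - 2 * a * κ ^ 2 * (r ^ (1 - 2 * a) * exp (-(b / 2) * r ^ 2)) := by
  have hderiv : deriv (fun s : ℝ => 1 + κ * s ^ (-(2 * a))) r
      = κ * (-(2 * a) * r ^ (-(2 * a) - 1)) :=
    (((hasDerivAt_rpow_const (Or.inl hr.ne')).const_mul κ).const_add 1).deriv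
  have hu : 0 < r ^ (2 * a) := rpow_pos_of_pos hr _
  have hsq : (r ^ a) ^ 2 = r ^ (2 * a) := by
    rw [← rpow_natCast, ← rpow_mul hr.le]; ring_nf
  have hneg : r ^ (-(2 * a)) = (r ^ (2 * a))⁻¹ := rpow_neg hr.le _
  have hneg1 : r ^ (-(2 * a) - 1) = (r ^ (2 * a))⁻¹ * r⁻¹ := by
    rw [rpow_sub hr, rpow_one, hneg, div_eq_mul_inv]
  have hone : r ^ (1 - 2 * a) = r * (r ^ (2 * a))⁻¹ := by
    rw [rpow_sub hr, rpow_one, div_eq_mul_inv]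
  have hexp : exp (-b * r ^ 2 / 4) ^ 2 = exp (-(b / 2) * r ^ 2) := by
    rw [← exp_nat_mul]; ring_nf
  rw [hderiv, mul_pow, hsq, hexp, hneg, hneg1, hone]
  field_simp
  ring

lemma quasiMode_energy_eq (hb : 0 < b) :
    b * ∫ r in Ioi (1 : ℝ), r ^ 2 * deriv (fun s : ℝ => 1 + κ * s ^ (-(2 * a))) r *
        (1 + κ * r ^ (-(2 * a))) * (r ^ a * exp (-b * r ^ 2 / 4)) ^ 2
      = -(2 * a * κ) * exp (-(b / 2))
        - 2 * a * κ ^ 2 * (b * ∫ r in Ioi (1 : ℝ), r ^ (1 - 2 * a) * exp (-(b / 2) * r ^ 2)) := by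
  have hc : 0 < b / 2 := half_pos hb
  have hlin : IntegrableOn (fun r : ℝ => r * exp (-(b / 2) * r ^ 2)) (Ioi 1) := by
    simpa using integrableOn_Ioi_one_rpow_mul_exp_neg_mul_sq hc 1
  rw [setIntegral_congr_fun measurableSet_Ioi fun r (hr : 1 < r) =>
      quasiMode_integrand_eq (zero_lt_one.trans hr),
    integral_sub (hlin.const_mul _)
      ((integrableOn_Ioi_one_rpow_mul_exp_neg_mul_sq hc _).const_mul _),
    integral_const_mul, integral_const_mul, integral_Ioi_mul_exp_neg_mul_sq hc zero_le_one]
  field_simp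

lemma abs_one_sub_quasiModeCoeff_mul_exp_le (ha : 1 / 2 ≤ a) (hb : 0 < b) (hb1 : b ≤ 1) :
    |1 - (a - b / 2) / (a + b / 2) * exp (-(b / 2))| ≤ 3 * b := by
  have hden : 0 < a + b / 2 := by linarith
  have hκ0 : 0 ≤ (a - b / 2) / (a + b / 2) := div_nonneg (by linarith) hden.le
  have hκ1 : (a - b / 2) / (a + b / 2) ≤ 1 := (div_le_one hden).mpr (by linarith)
  have hκ : 1 - (a - b / 2) / (a + b / 2) ≤ 2 * b := by
    rw [one_sub_div hden.ne', div_le_iff₀ hden]; nlinarith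
  have hexp_le : exp (-(b / 2)) ≤ 1 := exp_le_one_iff.mpr (by linarith)
  have hexp_ge : 1 - b / 2 ≤ exp (-(b / 2)) := by linarith [add_one_le_exp (-(b / 2))]
  rw [abs_le]
  constructor <;> nlinarith

lemma sq_quasiModeCoeff_le_one (ha : 0 ≤ a) (hb : 0 < b) :
    ((a - b / 2) / (a + b / 2)) ^ 2 ≤ 1 := by
  have hden : 0 < a + b / 2 := by linarith
  rw [sq_le_one_iff_abs_le_one, abs_le, le_div_iff₀ hden, div_le_one hden]
  constructor <;> linarith

end QuasiMode

/-- Energy asymptotics of the quasi-mode as `b → 0⁺`: with `a = m − ν`, `m ≥ 1`,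
`⟨(𝓛^{(m)} − b)Ψ, Ψ⟩ = b·∫₁^∞ r² χ'(r) χ(r) f(r)² dr = −2a + O(√b)`. -/
theorem quasi_mode_energy_asymptotics
    (m : ℤ) (hm : 1 ≤ m) (ν : ℝ) (hν : ν ∈ Set.Ioc (-(1:ℝ)/2) (1/2))
    (a : ℝ) (ha : a = (m : ℝ) - ν) :
    ∃ C > (0:ℝ), ∃ b₀ > (0:ℝ), ∀ b : ℝ, 0 < b → b < b₀ →
      |b * (∫ r in Set.Ioi (1:ℝ),
          r ^ 2 * deriv (fun s : ℝ => 1 + (a - b / 2) / (a + b / 2) * s ^ (-(2 * a))) r *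
            (1 + (a - b / 2) / (a + b / 2) * r ^ (-(2 * a))) *
            (r ^ a * Real.exp (-b * r ^ 2 / 4)) ^ 2)
        + 2 * a| ≤ C * Real.sqrt b := by
  have ha_half : 1 / 2 ≤ a := by
    have : (1 : ℝ) ≤ m := by exact_mod_cast hm
    linarith [hν.2]
  refine ⟨10 * a, by positivity, 1, one_pos, fun b hb hb1 => ?_⟩
  rw [quasiMode_energy_eq hb]
  set κ := (a - b / 2) / (a + b / 2)
  set J := ∫ r in Ioi (1 : ℝ), r ^ (1 - 2 * a) * exp (-(b / 2) * r ^ 2)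
  have hJ_nonneg : 0 ≤ b * J := mul_nonneg hb.le <| setIntegral_nonneg measurableSet_Ioi
    fun r (hr : 1 < r) => by have := zero_lt_one.trans hr; positivity
  have hbJ : b * J ≤ 2 * √b := (mul_le_mul_of_nonneg_left
    (integral_Ioi_one_rpow_mul_exp_neg_mul_sq_le (half_pos hb) (by linarith)) hb.le).trans
      (mul_sqrt_pi_div_half_le hb)
  have hb_sqrt : b ≤ √b := by
    nlinarith [sq_sqrt hb.le, sqrt_le_one.mpr hb1.le, sqrt_nonneg b]
  calc |-(2 * a * κ) * exp (-(b / 2)) - 2 * a * κ ^ 2 * (b * J) + 2 * a|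
      = |2 * a * (1 - κ * exp (-(b / 2))) - 2 * a * κ ^ 2 * (b * J)| := by ring_nf
    _ ≤ 2 * a * |1 - κ * exp (-(b / 2))| + 2 * a * κ ^ 2 * (b * J) := by
        refine (abs_sub _ _).trans (le_of_eq ?_)
        rw [abs_mul, abs_of_nonneg (by positivity : (0 : ℝ) ≤ 2 * a),
          abs_of_nonneg (by positivity : 0 ≤ 2 * a * κ ^ 2 * (b * J))]
    _ ≤ 2 * a * (3 * b) + 2 * a * 1 * (2 * √b) := by
        gcongr
        · exact abs_one_sub_quasiModeCoeff_mul_exp_le ha_half hb hb1.le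
        · exact sq_quasiModeCoeff_le_one (by linarith) hb
    _ ≤ 10 * a * √b := by nlinarith
end

section
/- (Implicit equation for the Neumann eigenvalues of the fiber operator) Let b > 0, k ∈ ℝ and λ < b, set a = 1/2 − λ/(2b) > 0, and define v(r) = e^{−b·r²/4}·r^{k}·U(a, k+1, b·r²/2) for r > 0. Then v'(1) = e^{−b/4}·[ (k − b/2)·U(a, k+1, b/2) + (λ/2 − b/2)·U(a+1, k+2, b/2) ]. In particular, v'(1) = 0 if and only if (k − b/2)·U(a, k+1, b/2) + (λ/2 − b/2)·U(a+1, k+2, b/2) = 0. -/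
/-!
Differentiating the integral representation under the integral sign gives
`∂_z U(a, c, z) = -a · U(a + 1, c + 1, z)`, using `Γ(a + 1) = a · Γ(a)`: on a ball around `z`
the `z`-derivative of the integrand is dominated by the integrand at `z / 2`, which is
integrable because `(1 + t) ^ q` grows at most polynomially. The formula for `v'(1)` then
follows from the product and chain rules, and `-a · b = λ/2 - b/2` by the choice of `a`.
-/

open MeasureTheory

/-- The confluent hypergeometric function of the second kind, defined for `a > 0`, `z > 0`
by its integral representation `U(a,c,z) = (1/Γ(a))·∫₀^∞ e^{−zt} t^{a−1} (1+t)^{c−a−1} dt`. -/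
noncomputable def hypergeometricU (a c z : ℝ) : ℝ :=
  (1 / Real.Gamma a) *
    ∫ t in Set.Ioi (0:ℝ), Real.exp (-z * t) * t ^ (a - 1) * (1 + t) ^ (c - a - 1)

open Real Set

lemma Real.add_rpow_le_two_rpow_mul_rpow_add_rpow {x y p : ℝ} (hx : 0 ≤ x) (hy : 0 ≤ y)
    (hp : 0 ≤ p) : (x + y) ^ p ≤ 2 ^ p * (x ^ p + y ^ p) := calc
  (x + y) ^ p ≤ (2 * max x y) ^ p := by
    gcongr
    linarith [le_max_left x y, le_max_right x y]
  _ = 2 ^ p * max x y ^ p := mul_rpow zero_le_two (hx.trans (le_max_left x y))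
  _ ≤ 2 ^ p * (x ^ p + y ^ p) := by
    gcongr
    rcases max_cases x y with ⟨h, -⟩ | ⟨h, -⟩ <;> rw [h]
    · linarith [rpow_nonneg hy p]
    · linarith [rpow_nonneg hx p]

lemma one_add_rpow_le (q : ℝ) {t : ℝ} (ht : 0 ≤ t) :
    (1 + t) ^ q ≤ 2 ^ max q 0 * (1 + t ^ max q 0) := calc
  (1 + t) ^ q ≤ (1 + t) ^ max q 0 := rpow_le_rpow_of_exponent_le (by linarith) (le_max_left q 0)
  _ ≤ 2 ^ max q 0 * (1 ^ max q 0 + t ^ max q 0) :=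
    add_rpow_le_two_rpow_mul_rpow_add_rpow zero_le_one ht (le_max_right q 0)
  _ = 2 ^ max q 0 * (1 + t ^ max q 0) := by rw [one_rpow]

lemma continuousOn_exp_mul_rpow_mul_one_add_rpow (z p q : ℝ) :
    ContinuousOn (fun t : ℝ => exp (-z * t) * t ^ p * (1 + t) ^ q) (Ioi 0) := by
  refine ((continuous_exp.comp (continuous_const.mul continuous_id)).continuousOn.mul
    (continuousOn_id.rpow_const fun t ht => Or.inl (ne_of_gt ht))).mul
    ((continuousOn_const.add continuousOn_id).rpow_const fun t ht => Or.inl ?_)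
  exact (add_pos one_pos ht).ne'

lemma integrableOn_exp_mul_rpow_mul_one_add_rpow {z p : ℝ} (hz : 0 < z) (hp : -1 < p)
    (q : ℝ) :
    IntegrableOn (fun t : ℝ => exp (-z * t) * t ^ p * (1 + t) ^ q) (Ioi 0) := by
  set M := max q 0
  have hgamma (s : ℝ) (hs : -1 < s) :
      IntegrableOn (fun t : ℝ => t ^ s * exp (-z * t)) (Ioi 0) := by
    simpa only [rpow_one] using integrableOn_rpow_mul_exp_neg_mul_rpow hs zero_lt_one hz
  have hdom : IntegrableOn
      (fun t : ℝ => 2 ^ M * (t ^ p * exp (-z * t) + t ^ (p + M) * exp (-z * t))) (Ioi 0) :=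
    ((hgamma p hp).add (hgamma (p + M) (by linarith [le_max_right q 0]))).const_mul _
  refine hdom.mono' ((continuousOn_exp_mul_rpow_mul_one_add_rpow z p q).aestronglyMeasurable
    measurableSet_Ioi) ((ae_restrict_iff' measurableSet_Ioi).2 (ae_of_all _ fun t ht => ?_))
  have ht : 0 < t := ht
  rw [norm_of_nonneg (by positivity), rpow_add ht]
  calc exp (-z * t) * t ^ p * (1 + t) ^ q
      ≤ exp (-z * t) * t ^ p * (2 ^ M * (1 + t ^ M)) := by
        gcongr; exact one_add_rpow_le q ht.le
    _ = _ := by ring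

lemma hasDerivAt_integral_exp_mul_rpow_mul_one_add_rpow {z p : ℝ} (hz : 0 < z) (hp : -1 < p)
    (q : ℝ) :
    HasDerivAt (fun x => ∫ t in Ioi 0, exp (-x * t) * t ^ p * (1 + t) ^ q)
      (-∫ t in Ioi 0, exp (-z * t) * t ^ (p + 1) * (1 + t) ^ q) z := by
  rw [← integral_neg]
  have hball : ∀ x ∈ Metric.ball z (z / 2), z / 2 ≤ x := fun x hx => by
    rw [Metric.mem_ball, dist_eq, abs_sub_lt_iff] at hx
    linarith
  refine (hasDerivAt_integral_of_dominated_loc_of_deriv_le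
    (F' := fun x t => -(exp (-x * t) * t ^ (p + 1) * (1 + t) ^ q))
    (Metric.ball_mem_nhds z (half_pos hz))
    (Filter.Eventually.of_forall fun x =>
      (continuousOn_exp_mul_rpow_mul_one_add_rpow x p q).aestronglyMeasurable measurableSet_Ioi)
    (integrableOn_exp_mul_rpow_mul_one_add_rpow hz hp q)
    ((continuousOn_exp_mul_rpow_mul_one_add_rpow z (p + 1) q).neg.aestronglyMeasurable
      measurableSet_Ioi)
    ?_ (integrableOn_exp_mul_rpow_mul_one_add_rpow (p := p + 1) (half_pos hz) (by linarith) q)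
    ?_).2
  all_goals
    refine (ae_restrict_iff' measurableSet_Ioi).2 (ae_of_all _ fun t ht x hx => ?_)
    have ht : 0 < t := ht
  · rw [norm_neg, norm_of_nonneg (by positivity)]
    gcongr
    nlinarith [hball x hx]
  · have hlin : HasDerivAt (fun y => -y * t) (-t) x := by
      simpa using (hasDerivAt_id x).neg.mul_const t
    refine ((hlin.exp.mul_const _).mul_const _).congr_deriv ?_
    rw [rpow_add_one ht.ne']
    ring

theorem hasDerivAt_hypergeometricU {a z : ℝ} (c : ℝ) (ha : 0 < a) (hz : 0 < z) :
    HasDerivAt (hypergeometricU a c) (-a * hypergeometricU (a + 1) (c + 1) z) z := by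
  have hI := (hasDerivAt_integral_exp_mul_rpow_mul_one_add_rpow hz
    (by linarith : -1 < a - 1) (c - a - 1)).const_mul (1 / Gamma a)
  have hderiv : -a * hypergeometricU (a + 1) (c + 1) z =
      1 / Gamma a * -∫ t in Ioi 0, exp (-z * t) * t ^ (a - 1 + 1) * (1 + t) ^ (c - a - 1) := by
    rw [hypergeometricU, Gamma_add_one ha.ne', add_sub_cancel_right, sub_add_cancel,
      show c + 1 - (a + 1) - 1 = c - a - 1 by ring]
    field_simp [(Gamma_pos_of_pos ha).ne']
  rw [hderiv]
  exact hI

theorem hasDerivAt_exp_mul_rpow_mul_hypergeometricU_one {a b : ℝ} (ha : 0 < a) (hb : 0 < b)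
    (k c : ℝ) :
    HasDerivAt (fun r : ℝ => exp (-b * r ^ 2 / 4) * r ^ k * hypergeometricU a c (b * r ^ 2 / 2))
      (exp (-b / 4) * ((k - b / 2) * hypergeometricU a c (b / 2)
        - a * b * hypergeometricU (a + 1) (c + 1) (b / 2))) 1 := by
  have hgauss : HasDerivAt (fun r : ℝ => exp (-b * r ^ 2 / 4)) (exp (-b / 4) * (-b / 2)) 1 := by
    convert (((hasDerivAt_pow 2 (1 : ℝ)).const_mul (-b)).div_const 4).exp using 1
    norm_num
    ring
  have hpow : HasDerivAt (fun r : ℝ => r ^ k) k 1 := by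
    simpa using hasDerivAt_rpow_const (x := 1) (p := k) (Or.inl one_ne_zero)
  have hU : HasDerivAt (fun r : ℝ => hypergeometricU a c (b * r ^ 2 / 2))
      (-a * hypergeometricU (a + 1) (c + 1) (b / 2) * b) 1 := by
    have hscale : HasDerivAt (fun r : ℝ => b * r ^ 2 / 2) b 1 := by
      simpa using ((hasDerivAt_pow 2 (1 : ℝ)).const_mul b).div_const 2
    have hU' : HasDerivAt (hypergeometricU a c) (-a * hypergeometricU (a + 1) (c + 1) (b / 2))
        (b * 1 ^ 2 / 2) := by
      simpa using hasDerivAt_hypergeometricU c ha (half_pos hb)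
    exact hU'.comp (h := fun r : ℝ => b * r ^ 2 / 2) 1 hscale
  refine ((hgauss.mul hpow).mul hU).congr_deriv ?_
  simp only [Pi.mul_apply, one_rpow, one_pow, mul_one]
  ring

/-- Implicit equation for the Neumann eigenvalues of the fiber operator: with
`a = 1/2 − λ/(2b) > 0` and `v(r) = e^{−br²/4} r^k U(a, k+1, br²/2)`, one has
`v'(1) = e^{−b/4}·[(k − b/2)·U(a, k+1, b/2) + (λ/2 − b/2)·U(a+1, k+2, b/2)]`;
in particular `v'(1) = 0` iff the bracket vanishes. -/
theorem fiber_neumann_implicit_equation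
    (b : ℝ) (hb : 0 < b) (k lam : ℝ) (hlam : lam < b)
    (a : ℝ) (ha : a = 1 / 2 - lam / (2 * b))
    (v : ℝ → ℝ)
    (hv : ∀ r, v r = Real.exp (-b * r ^ 2 / 4) * r ^ k * hypergeometricU a (k + 1) (b * r ^ 2 / 2)) :
    deriv v 1 = Real.exp (-b / 4) *
        ((k - b / 2) * hypergeometricU a (k + 1) (b / 2)
          + (lam / 2 - b / 2) * hypergeometricU (a + 1) (k + 2) (b / 2)) ∧
    (deriv v 1 = 0 ↔
      (k - b / 2) * hypergeometricU a (k + 1) (b / 2)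
        + (lam / 2 - b / 2) * hypergeometricU (a + 1) (k + 2) (b / 2) = 0) := by
  have ha_pos : 0 < a := by
    rw [ha, sub_pos, div_lt_iff₀ (by positivity)]
    linarith
  have hab : -(a * b) = lam / 2 - b / 2 := by
    rw [ha]
    field_simp
    ring
  have hderiv : deriv v 1 = exp (-b / 4) *
      ((k - b / 2) * hypergeometricU a (k + 1) (b / 2)
        + (lam / 2 - b / 2) * hypergeometricU (a + 1) (k + 2) (b / 2)) := by
    rw [funext hv, (hasDerivAt_exp_mul_rpow_mul_hypergeometricU_one ha_pos hb k (k + 1)).deriv,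
      ← hab, show k + 1 + 1 = k + 2 by ring]
    ring
  exact ⟨hderiv, by rw [hderiv, mul_eq_zero, or_iff_right (exp_ne_zero _)]⟩
end
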